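/- arXiv:1009.3726 — 3 statements merged into one kernel-verified Lean document; each statement's English description precedes it below -/
import Mathlib

section
/- For multisets S, T of real numbers with finite ℓ¹-mass (and 0 with infinite multiplicity), the distance splits along sign: d(S,T) = d(S₊,T₊) + d(S₋,T₋), where S₊ (resp. S₋) is the submultiset of nonnegative (resp. nonpositive) elements. -/
/-- Two sequences enumerate the same rigged set (countable multiset of reals
with `0` adjoined with infinite multiplicity, so padding with zeros is allowed)
iff every nonzero real occurs in both with the same (finite) multiplicity. -/
def SameRigged (s t : ℕ → ℝ) : Prop :=
  ∀ x : ℝ, x ≠ 0 → {j | s j = x}.ncard = {j | t j = x}.ncard ∧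
    ({j | s j = x}.Finite ↔ {j | t j = x}.Finite)

/-- The transport distance between the rigged sets enumerated by `s` and `t`:
the infimum over all pairs of enumerations of the ℓ¹-distance `∑ⱼ |sⱼ' − tⱼ'|`. -/
noncomputable def rdist (s t : ℕ → ℝ) : ℝ :=
  sInf { c : ℝ | ∃ s' t' : ℕ → ℝ, SameRigged s s' ∧ SameRigged t t' ∧
    HasSum (fun j => |s' j - t' j|) c }

set_option linter.unreachableTactic false
set_option linter.unusedTactic false

lemma key_abs (a b : ℝ) : |max a 0 - max b 0| + |min a 0 - min b 0| = |a - b| := by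
  rcases le_total a 0 with ha|ha <;> rcases le_total b 0 with hb|hb <;>
    rcases le_total a b with hab|hab <;>
    simp [max_eq_left, max_eq_right, min_eq_left, min_eq_right, ha, hb,
      abs_of_nonneg, abs_of_nonpos, sub_nonneg.mpr, sub_nonpos.mpr, hab] <;>
    (try rw [abs_of_nonpos (by linarith)]) <;> (try rw [abs_of_nonneg (by linarith)]) <;> linarith

lemma sameRigged_refl (s : ℕ → ℝ) : SameRigged s s := fun _ _ => ⟨rfl, Iff.rfl⟩

lemma set_max_pos {s : ℕ → ℝ} {x : ℝ} (hx : 0 < x) :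
    {j | max (s j) 0 = x} = {j | s j = x} := by
  ext j
  simp only [Set.mem_setOf_eq]
  constructor
  · intro h
    rcases le_or_gt (s j) 0 with h'|h'
    · rw [max_eq_right h'] at h; linarith
    · rwa [max_eq_left h'.le] at h
  · intro h; rw [max_eq_left (by linarith)]; exact h

lemma set_max_neg {s : ℕ → ℝ} {x : ℝ} (hx : x < 0) :
    {j | max (s j) 0 = x} = ∅ := by
  ext j
  simp only [Set.mem_setOf_eq, Set.mem_empty_iff_false, iff_false]
  intro h
  have : (0:ℝ) ≤ max (s j) 0 := le_max_right _ _
  linarith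

lemma set_min_neg {s : ℕ → ℝ} {x : ℝ} (hx : x < 0) :
    {j | min (s j) 0 = x} = {j | s j = x} := by
  ext j
  simp only [Set.mem_setOf_eq]
  constructor
  · intro h
    rcases le_or_gt (s j) 0 with h'|h'
    · rwa [min_eq_left h'] at h
    · rw [min_eq_right h'.le] at h; linarith
  · intro h; rw [min_eq_left (by linarith)]; exact h

lemma set_min_pos {s : ℕ → ℝ} {x : ℝ} (hx : 0 < x) :
    {j | min (s j) 0 = x} = ∅ := by
  ext j
  simp only [Set.mem_setOf_eq, Set.mem_empty_iff_false, iff_false]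
  intro h
  have : min (s j) 0 ≤ 0 := min_le_right _ _
  linarith

lemma sameRigged_max {s s' : ℕ → ℝ} (h : SameRigged s s') :
    SameRigged (fun j => max (s j) 0) (fun j => max (s' j) 0) := by
  intro x hx
  rcases hx.lt_or_gt with h0|h0
  · rw [set_max_neg h0, set_max_neg h0]
    exact ⟨rfl, Iff.rfl⟩
  · rw [set_max_pos h0, set_max_pos h0]
    exact h x hx

lemma sameRigged_min {s s' : ℕ → ℝ} (h : SameRigged s s') :
    SameRigged (fun j => min (s j) 0) (fun j => min (s' j) 0) := by
  intro x hx
  rcases hx.lt_or_gt with h0|h0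
  · rw [set_min_neg h0, set_min_neg h0]
    exact h x hx
  · rw [set_min_pos h0, set_min_pos h0]
    exact ⟨rfl, Iff.rfl⟩

noncomputable def interleave (p q : ℕ → ℝ) (n : ℕ) : ℝ :=
  if n % 2 = 0 then p (n / 2) else q (n / 2)

lemma interleave_even (p q : ℕ → ℝ) (k : ℕ) : interleave p q (2 * k) = p k := by
  have h1 : (2 * k) % 2 = 0 := by omega
  have h2 : (2 * k) / 2 = k := by omega
  simp [interleave, h1, h2]

lemma interleave_odd (p q : ℕ → ℝ) (k : ℕ) : interleave p q (2 * k + 1) = q k := by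
  have h1 : (2 * k + 1) % 2 = 1 := by omega
  have h2 : (2 * k + 1) / 2 = k := by omega
  simp [interleave, h1, h2]

lemma interleave_set_p (p q : ℕ → ℝ) (x : ℝ) (hq : {k | q k = x} = ∅) :
    {j | interleave p q j = x} = (fun k => 2 * k) '' {k | p k = x} := by
  ext j
  simp only [Set.mem_setOf_eq, Set.mem_image]
  constructor
  · intro h
    by_cases hj : j % 2 = 0
    · refine ⟨j / 2, ?_, by omega⟩
      simpa [interleave, hj] using h
    · exfalso
      rw [interleave, if_neg hj] at h
      exact (Set.eq_empty_iff_forall_notMem.mp hq (j / 2)) h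
  · rintro ⟨k, hk, rfl⟩
    rw [interleave_even]; exact hk

lemma interleave_set_q (p q : ℕ → ℝ) (x : ℝ) (hp : {k | p k = x} = ∅) :
    {j | interleave p q j = x} = (fun k => 2 * k + 1) '' {k | q k = x} := by
  ext j
  simp only [Set.mem_setOf_eq, Set.mem_image]
  constructor
  · intro h
    by_cases hj : j % 2 = 0
    · exfalso
      rw [interleave, if_pos hj] at h
      exact (Set.eq_empty_iff_forall_notMem.mp hp (j / 2)) h
    · refine ⟨j / 2, ?_, by omega⟩
      simpa [interleave, hj] using h
  · rintro ⟨k, hk, rfl⟩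
    rw [interleave_odd]; exact hk

lemma sameRigged_interleave {s p q : ℕ → ℝ}
    (hp : SameRigged (fun j => max (s j) 0) p)
    (hq : SameRigged (fun j => min (s j) 0) q) :
    SameRigged s (interleave p q) := by
  intro x hx
  rcases hx.lt_or_gt with h0|h0
  · -- x < 0 : uses q
    obtain ⟨hc, hf⟩ := hq x hx
    rw [set_min_neg h0] at hc hf
    -- p-part is empty
    obtain ⟨hc', hf'⟩ := hp x hx
    rw [set_max_neg h0] at hc' hf'
    have hfinp : {k | p k = x}.Finite := hf'.mp (Set.finite_empty)
    have hpe : {k | p k = x} = ∅ := by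
      rw [← Set.ncard_eq_zero hfinp]
      rw [← hc']; simp
    rw [interleave_set_q p q x hpe]
    have hinj : Function.Injective (fun k : ℕ => 2 * k + 1) := fun a b h => by dsimp at h; omega
    constructor
    · rw [Set.ncard_image_of_injective _ hinj]; exact hc
    · rw [Set.finite_image_iff hinj.injOn]; exact hf
  · -- 0 < x : uses p
    obtain ⟨hc, hf⟩ := hp x hx
    rw [set_max_pos h0] at hc hf
    obtain ⟨hc', hf'⟩ := hq x hx
    rw [set_min_pos h0] at hc' hf'
    have hfinq : {k | q k = x}.Finite := hf'.mp (Set.finite_empty)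
    have hqe : {k | q k = x} = ∅ := by
      rw [← Set.ncard_eq_zero hfinq]
      rw [← hc']; simp
    rw [interleave_set_p p q x hqe]
    have hinj : Function.Injective (fun k : ℕ => 2 * k) := fun a b h => by dsimp at h; omega
    constructor
    · rw [Set.ncard_image_of_injective _ hinj]; exact hc
    · rw [Set.finite_image_iff hinj.injOn]; exact hf

/-- the transport distance splits along sign:
`d(S,T) = d(S₊,T₊) + d(S₋,T₋)`, where the positive part `S₊` is enumerated by
`j ↦ max (s j) 0` and the negative part `S₋` by `j ↦ min (s j) 0` (extra zeros
being allowed in enumerations). -/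
theorem stmt_6 (s t : ℕ → ℝ)
    (hs : Summable fun j => |s j|) (ht : Summable fun j => |t j|) :
    rdist s t =
      rdist (fun j => max (s j) 0) (fun j => max (t j) 0) +
      rdist (fun j => min (s j) 0) (fun j => min (t j) 0) := by
  set C := { c : ℝ | ∃ s' t' : ℕ → ℝ, SameRigged s s' ∧ SameRigged t t' ∧
    HasSum (fun j => |s' j - t' j|) c } with hC
  set A := { c : ℝ | ∃ s' t' : ℕ → ℝ, SameRigged (fun j => max (s j) 0) s' ∧
    SameRigged (fun j => max (t j) 0) t' ∧ HasSum (fun j => |s' j - t' j|) c } with hA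
  set B := { c : ℝ | ∃ s' t' : ℕ → ℝ, SameRigged (fun j => min (s j) 0) s' ∧
    SameRigged (fun j => min (t j) 0) t' ∧ HasSum (fun j => |s' j - t' j|) c } with hB
  have hst : Summable fun j => |s j - t j| :=
    Summable.of_nonneg_of_le (fun j => abs_nonneg _)
      (fun j => abs_sub (s j) (t j)) (hs.add ht)
  -- bounded below by 0
  have bdd : ∀ (u v : ℕ → ℝ), BddBelow { c : ℝ | ∃ s' t' : ℕ → ℝ, SameRigged u s' ∧
      SameRigged v t' ∧ HasSum (fun j => |s' j - t' j|) c } := by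
    intro u v
    refine ⟨0, ?_⟩
    rintro c ⟨s', t', _, _, hsum⟩
    exact hasSum_le (fun j => abs_nonneg _) hasSum_zero hsum
  have bddC : BddBelow C := bdd s t
  have bddA : BddBelow A := bdd _ _
  have bddB : BddBelow B := bdd _ _
  -- nonempty
  have neC : C.Nonempty :=
    ⟨_, s, t, sameRigged_refl s, sameRigged_refl t, hst.hasSum⟩
  have habsmax : ∀ a b : ℝ, |max a 0 - max b 0| ≤ |a - b| := by
    intro a b
    have := key_abs a b
    have h2 : (0:ℝ) ≤ |min a 0 - min b 0| := abs_nonneg _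
    linarith
  have habsmin : ∀ a b : ℝ, |min a 0 - min b 0| ≤ |a - b| := by
    intro a b
    have := key_abs a b
    have h2 : (0:ℝ) ≤ |max a 0 - max b 0| := abs_nonneg _
    linarith
  have hsumA : Summable fun j => |max (s j) 0 - max (t j) 0| :=
    Summable.of_nonneg_of_le (fun j => abs_nonneg _) (fun j => habsmax (s j) (t j)) hst
  have hsumB : Summable fun j => |min (s j) 0 - min (t j) 0| :=
    Summable.of_nonneg_of_le (fun j => abs_nonneg _) (fun j => habsmin (s j) (t j)) hst
  have neA : A.Nonempty :=
    ⟨_, _, _, sameRigged_refl _, sameRigged_refl _, hsumA.hasSum⟩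
  have neB : B.Nonempty :=
    ⟨_, _, _, sameRigged_refl _, sameRigged_refl _, hsumB.hasSum⟩
  -- key claim for ≤ : sums of elements of A, B lie in C
  have memC : ∀ a ∈ A, ∀ b ∈ B, a + b ∈ C := by
    rintro a ⟨p, p', hp1, hp2, hpsum⟩ b ⟨q, q', hq1, hq2, hqsum⟩
    refine ⟨interleave p q, interleave p' q', sameRigged_interleave hp1 hq1,
      sameRigged_interleave hp2 hq2, ?_⟩
    refine HasSum.even_add_odd ?_ ?_
    · convert hpsum using 1
      funext k
      rw [interleave_even, interleave_even]
    · convert hqsum using 1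
      funext k
      rw [interleave_odd, interleave_odd]
  -- key claim for ≥ : every element of C splits
  have splitC : ∀ c ∈ C, ∃ a ∈ A, ∃ b ∈ B, a + b = c := by
    rintro c ⟨s', t', hs1, ht1, hsum⟩
    have hsummable : Summable fun j => |s' j - t' j| := hsum.summable
    have hA' : Summable fun j => |max (s' j) 0 - max (t' j) 0| :=
      Summable.of_nonneg_of_le (fun j => abs_nonneg _)
        (fun j => habsmax (s' j) (t' j)) hsummable
    have hB' : Summable fun j => |min (s' j) 0 - min (t' j) 0| :=
      Summable.of_nonneg_of_le (fun j => abs_nonneg _)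
        (fun j => habsmin (s' j) (t' j)) hsummable
    refine ⟨_, ⟨_, _, sameRigged_max hs1, sameRigged_max ht1, hA'.hasSum⟩,
      _, ⟨_, _, sameRigged_min hs1, sameRigged_min ht1, hB'.hasSum⟩, ?_⟩
    have hadd := hA'.hasSum.add hB'.hasSum
    have heq : (fun j => |max (s' j) 0 - max (t' j) 0| + |min (s' j) 0 - min (t' j) 0|)
        = fun j => |s' j - t' j| := by
      funext j; exact key_abs (s' j) (t' j)
    rw [heq] at hadd
    exact hadd.unique hsum
  -- conclude
  refine le_antisymm ?_ ?_
  · -- sInf C ≤ sInf A + sInf B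
    have h1 : ∀ a ∈ A, sInf C ≤ a + sInf B := by
      intro a ha
      have : sInf C - a ≤ sInf B := by
        refine le_csInf neB ?_
        intro b hb
        have := csInf_le bddC (memC a ha b hb)
        linarith
      linarith
    have h2 : sInf C - sInf B ≤ sInf A := by
      refine le_csInf neA ?_
      intro a ha
      have := h1 a ha
      linarith
    show sInf C ≤ sInf A + sInf B
    linarith
  · -- sInf A + sInf B ≤ sInf C
    refine le_csInf neC ?_
    intro c hc
    obtain ⟨a, ha, b, hb, hab⟩ := splitC c hc
    have h1 := csInf_le bddA ha
    have h2 := csInf_le bddB hb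
    show sInf A + sInf B ≤ c
    linarith
end

section
/- The space of summable nonincreasing nonnegative sequences, with distance given by the ℓ¹-distance between the sorted (nonincreasing) enumerations, is a complete metric space; equivalently, the multiset transport distance on finite-ℓ¹-mass multisets of nonnegative reals is complete. -/
open Filter

/-- the space of summable nonincreasing nonnegative sequences,
with the ℓ¹ distance `ρ(a,b) = ∑ⱼ |aⱼ − bⱼ|`, is complete: every Cauchy
sequence has a limit in the space. -/
theorem stmt_8 (a : ℕ → ℕ → ℝ)
    (ha0 : ∀ n j, 0 ≤ a n j)
    (haA : ∀ n, Antitone (a n))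
    (haS : ∀ n, Summable (a n))
    (hCauchy : ∀ ε > (0 : ℝ), ∃ N, ∀ m ≥ N, ∀ n ≥ N,
      ∑' j, |a m j - a n j| < ε) :
    ∃ b : ℕ → ℝ, (∀ j, 0 ≤ b j) ∧ Antitone b ∧ Summable b ∧
      Tendsto (fun n => ∑' j, |a n j - b j|) atTop (nhds 0) := by
  have hsub : ∀ m n, Summable (fun j => |a m j - a n j|) := by
    intro m n
    apply Summable.of_nonneg_of_le (fun j => abs_nonneg _) (fun j => ?_)
      ((haS m).add (haS n))
    calc |a m j - a n j| ≤ |a m j| + |a n j| := abs_sub _ _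
      _ = a m j + a n j := by
        rw [abs_of_nonneg (ha0 m j), abs_of_nonneg (ha0 n j)]
  have hpt : ∀ j, ∃ l, Tendsto (fun n => a n j) atTop (nhds l) := by
    intro j
    apply cauchySeq_tendsto_of_complete
    rw [Metric.cauchySeq_iff]
    intro ε hε
    obtain ⟨N, hN⟩ := hCauchy ε hε
    refine ⟨N, fun m hm n hn => ?_⟩
    calc dist (a m j) (a n j) = |a m j - a n j| := Real.dist_eq _ _
      _ ≤ ∑' i, |a m i - a n i| := Summable.le_tsum (hsub m n) j (fun i _ => abs_nonneg _)
      _ < ε := hN m hm n hn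
  choose b hb using hpt
  have hb0 : ∀ j, 0 ≤ b j := fun j =>
    le_of_tendsto_of_tendsto' tendsto_const_nhds (hb j) (fun n => ha0 n j)
  have hbA : Antitone b := fun i j hij =>
    le_of_tendsto_of_tendsto' (hb j) (hb i) (fun n => haA n hij)
  have key : ∀ ε > (0 : ℝ), ∃ N, ∀ n ≥ N, ∀ s : Finset ℕ,
      ∑ j ∈ s, |a n j - b j| ≤ ε := by
    intro ε hε
    obtain ⟨N, hN⟩ := hCauchy ε hε
    refine ⟨N, fun n hn s => ?_⟩
    have hlim : Tendsto (fun m => ∑ j ∈ s, |a n j - a m j|) atTop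
        (nhds (∑ j ∈ s, |a n j - b j|)) := by
      apply tendsto_finset_sum
      intro j _
      exact (tendsto_const_nhds.sub (hb j)).abs
    apply le_of_tendsto hlim
    filter_upwards [eventually_ge_atTop N] with m hm
    calc ∑ j ∈ s, |a n j - a m j| ≤ ∑' j, |a n j - a m j| :=
          Summable.sum_le_tsum s (fun i _ => abs_nonneg _) (hsub n m)
      _ ≤ ε := (hN n hn m hm).le
  obtain ⟨N1, hN1⟩ := key 1 one_pos
  have hsum1 : Summable (fun j => |a N1 j - b j|) :=
    summable_of_sum_le (fun j => abs_nonneg _) (fun s => hN1 N1 le_rfl s)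
  have hbS : Summable b := by
    apply Summable.of_nonneg_of_le hb0 (fun j => ?_) (hsum1.add (haS N1))
    calc b j = b j - a N1 j + a N1 j := by ring
      _ ≤ |b j - a N1 j| + a N1 j := by gcongr; exact le_abs_self _
      _ = |a N1 j - b j| + a N1 j := by rw [abs_sub_comm]
  have hsubb : ∀ n, Summable (fun j => |a n j - b j|) := by
    intro n
    apply Summable.of_nonneg_of_le (fun j => abs_nonneg _) (fun j => ?_)
      ((haS n).add hbS)
    calc |a n j - b j| ≤ |a n j| + |b j| := abs_sub _ _
      _ = a n j + b j := by rw [abs_of_nonneg (ha0 n j), abs_of_nonneg (hb0 j)]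
  refine ⟨b, hb0, hbA, hbS, ?_⟩
  rw [Metric.tendsto_atTop]
  intro ε hε
  obtain ⟨N, hN⟩ := key (ε / 2) (by linarith)
  refine ⟨N, fun n hn => ?_⟩
  have ht : ∑' j, |a n j - b j| ≤ ε / 2 :=
    Summable.tsum_le_of_sum_le (hsubb n) (fun s => hN n hn s)
  have ht0 : (0 : ℝ) ≤ ∑' j, |a n j - b j| :=
    tsum_nonneg fun j => abs_nonneg _
  rw [Real.dist_eq, sub_zero, abs_of_nonneg ht0]
  linarith
end

section
/- For multisets of nonnegative reals with finite ℓ¹-mass, the transport distance equals the ℓ¹-distance of nonincreasing enumerations: if (sⱼ) and (tⱼ) are the nonincreasing enumerations of S and T (padded with zeros), then d(S,T) = Σⱼ |sⱼ − tⱼ|. -/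
open Set MeasureTheory
open scoped ENNReal Interval symmDiff

/-! Layer cake: `|a - b| = ∫ 1[l ∈ Ι a b] dl`, so `∑ⱼ |sⱼ - tⱼ| = ∫ #{j | l ∈ Ι sⱼ tⱼ} dl`, and for
`l > 0` that count is the size of the symmetric difference of the superlevel sets
`{j | l ≤ sⱼ}` and `{j | l ≤ tⱼ}`. The sizes of these finite sets depend only on the multisets,
and for nonincreasing enumerations they are initial segments of `ℕ`, hence nested, which makes
their symmetric difference as small as it can be. -/

section Counting

variable {α : Type*} {A B A' B' : Set α}

theorem encard_symmDiff_le_of_subset (hAB : A ⊆ B) (hA : A.Finite)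
    (hAA' : A.encard = A'.encard) (hBB' : B.encard = B'.encard) :
    (A ∆ B).encard ≤ (A' ∆ B').encard := by
  have hB' : B'.encard ≤ (B' \ A').encard + A'.encard := by
    rw [encard_sdiff_add_encard]
    exact encard_le_encard subset_union_left
  have hcancel : (B \ A).encard + A.encard ≤ (B' \ A').encard + A.encard := by
    rwa [encard_sdiff_add_encard_of_subset hAB, hBB', hAA']
  calc (A ∆ B).encard = (B \ A).encard := by
        rw [Set.symmDiff_def, sdiff_eq_empty.2 hAB, empty_union]
    _ ≤ (B' \ A').encard := (ENat.add_le_add_iff_right hA.encard_lt_top.ne).1 hcancel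
    _ ≤ (A' ∆ B').encard := encard_le_encard (by rw [Set.symmDiff_def]; exact subset_union_right)

/-- Among pairs of sets with prescribed finite cardinalities, nested pairs minimize the
symmetric difference. -/
theorem encard_symmDiff_le_of_isLowerSet [LinearOrder α] (hA : IsLowerSet A) (hB : IsLowerSet B)
    (hAf : A.Finite) (hBf : B.Finite) (hAA' : A.encard = A'.encard) (hBB' : B.encard = B'.encard) :
    (A ∆ B).encard ≤ (A' ∆ B').encard := by
  rcases hA.total hB with hAB | hBA
  · exact encard_symmDiff_le_of_subset hAB hAf hAA' hBB'
  · rw [symmDiff_comm A, symmDiff_comm A']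
    exact encard_symmDiff_le_of_subset hBA hBf hBB' hAA'

end Counting

theorem Summable.finite_setOf_le {ι : Type*} {s : ι → ℝ} (hs : Summable s) {l : ℝ} (hl : 0 < l) :
    {j | l ≤ s j}.Finite := by
  simpa only [not_lt] using
    Filter.eventually_cofinite.1 (hs.tendsto_cofinite_zero.eventually (gt_mem_nhds hl))

theorem Summable.abs_sub {ι : Type*} {s t : ι → ℝ} (hs : Summable s) (ht : Summable t) :
    Summable fun j => |s j - t j| :=
  .of_nonneg_of_le (fun _ => abs_nonneg _) (fun _ => _root_.abs_sub _ _) (hs.abs.add ht.abs)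

namespace SameRigged

variable {s s' : ℕ → ℝ}

theorem refl (s : ℕ → ℝ) : SameRigged s s := fun _ _ => ⟨rfl, Iff.rfl⟩

theorem encard_fiber_eq (h : SameRigged s s') {x : ℝ} (hx : x ≠ 0) :
    {j | s j = x}.encard = {j | s' j = x}.encard := by
  obtain ⟨hcard, hfin⟩ := h x hx
  by_cases hf : {j | s j = x}.Finite
  · rw [← hf.cast_ncard_eq, ← (hfin.1 hf).cast_ncard_eq, hcard]
  · rw [Infinite.encard_eq hf, Infinite.encard_eq (mt hfin.2 hf)]

theorem mem_range_iff (h : SameRigged s s') {x : ℝ} (hx : x ≠ 0) :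
    x ∈ range s ↔ x ∈ range s' := by
  change {j | s j = x}.Nonempty ↔ {j | s' j = x}.Nonempty
  rw [← encard_pos, ← encard_pos, h.encard_fiber_eq hx]

theorem encard_preimage_eq (h : SameRigged s s') (X : Finset ℝ) (hX : 0 ∉ X) :
    (s ⁻¹' X).encard = (s' ⁻¹' X).encard := by
  induction X using Finset.induction_on with
  | empty => simp
  | insert x X hxX ih =>
    have hx : x ≠ 0 := fun hx => hX (hx ▸ Finset.mem_insert_self x X)
    have hdisj (u : ℕ → ℝ) : Disjoint (u ⁻¹' {x}) (u ⁻¹' X) :=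
      (disjoint_singleton_left.2 (by exact_mod_cast hxX)).preimage u
    rw [Finset.coe_insert, insert_eq, preimage_union, preimage_union,
      encard_union_eq (hdisj s), encard_union_eq (hdisj s'),
      ih (fun h0 => hX (Finset.mem_insert_of_mem h0))]
    exact congrArg (· + _) (h.encard_fiber_eq hx)

theorem encard_setOf_le_eq (h : SameRigged s s') (hs : Summable s) {l : ℝ} (hl : 0 < l) :
    {j | l ≤ s j}.encard = {j | l ≤ s' j}.encard := by
  set X := (hs.finite_setOf_le hl).image s |>.toFinset
  have hX : ∀ {x}, x ∈ X ↔ l ≤ x ∧ x ∈ range s := by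
    intro x
    simp only [X, Finite.mem_toFinset, mem_image, mem_ofPred_eq, mem_range]
    constructor
    · rintro ⟨j, hj, rfl⟩; exact ⟨hj, j, rfl⟩
    · rintro ⟨hx, j, rfl⟩; exact ⟨j, hx, rfl⟩
  have hX0 : (0 : ℝ) ∉ X := fun h0 => (hX.1 h0).1.not_gt hl
  have hs'X : {j | l ≤ s' j} = s' ⁻¹' X := by
    ext j
    simp only [mem_ofPred_eq, mem_preimage, Finset.mem_coe, hX]
    exact ⟨fun hj => ⟨hj, (h.mem_range_iff (hl.trans_le hj).ne').2 ⟨j, rfl⟩⟩, And.left⟩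
  have hsX : {j | l ≤ s j} = s ⁻¹' X := by
    ext j
    simp only [mem_ofPred_eq, mem_preimage, Finset.mem_coe, hX]
    exact ⟨fun hj => ⟨hj, j, rfl⟩, And.left⟩
  rw [hsX, hs'X, h.encard_preimage_eq X hX0]

end SameRigged

theorem setOf_mem_uIoc_eq_symmDiff {ι α : Type*} [LinearOrder α] (u v : ι → α) (l : α) :
    {j | l ∈ Ι (u j) (v j)} = {j | l ≤ u j} ∆ {j | l ≤ v j} := by
  ext j
  simp only [mem_ofPred_eq, mem_uIoc, mem_symmDiff, not_le]
  exact or_comm.trans (or_congr and_comm and_comm)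

theorem tsum_ofReal_abs_sub_eq_lintegral {ι : Type*} [Countable ι] (u v : ι → ℝ) :
    ∑' j, ENNReal.ofReal |u j - v j| = ∫⁻ l, ({j | l ∈ Ι (u j) (v j)}.encard : ℝ≥0∞) := by
  have hcount (l : ℝ) : ∑' j, (Ι (u j) (v j)).indicator 1 l =
      ({j | l ∈ Ι (u j) (v j)}.encard : ℝ≥0∞) := by
    rw [← ENNReal.tsum_set_one, tsum_subtype _ fun _ => (1 : ℝ≥0∞)]
    rfl
  simp_rw [← hcount]
  rw [lintegral_tsum fun j => (measurable_one.indicator measurableSet_uIoc).aemeasurable]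
  refine tsum_congr fun j => ?_
  rw [lintegral_indicator_one measurableSet_uIoc, Real.volume_uIoc, abs_sub_comm]

theorem encard_setOf_mem_uIoc_le {s t s' t' : ℕ → ℝ}
    (hs0 : ∀ j, 0 ≤ s j) (ht0 : ∀ j, 0 ≤ t j) (hsa : Antitone s) (hta : Antitone t)
    (hs : Summable s) (ht : Summable t) (hss' : SameRigged s s') (htt' : SameRigged t t')
    (l : ℝ) : {j | l ∈ Ι (s j) (t j)}.encard ≤ {j | l ∈ Ι (s' j) (t' j)}.encard := by
  rcases le_or_gt l 0 with hl | hl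
  · have hempty : {j | l ∈ Ι (s j) (t j)} = ∅ :=
      eq_empty_of_forall_notMem fun j hj =>
        (hj.1.trans_le hl).not_ge (le_min (hs0 j) (ht0 j))
    simp [hempty]
  · have hlower {u : ℕ → ℝ} (hu : Antitone u) : IsLowerSet {j | l ≤ u j} :=
      fun _ _ hij hj => le_trans hj (hu hij)
    rw [setOf_mem_uIoc_eq_symmDiff, setOf_mem_uIoc_eq_symmDiff]
    exact encard_symmDiff_le_of_isLowerSet (hlower hsa) (hlower hta)
      (hs.finite_setOf_le hl) (ht.finite_setOf_le hl)
      (hss'.encard_setOf_le_eq hs hl) (htt'.encard_setOf_le_eq ht hl)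

theorem tsum_abs_sub_le_of_hasSum {s t s' t' : ℕ → ℝ}
    (hs0 : ∀ j, 0 ≤ s j) (ht0 : ∀ j, 0 ≤ t j) (hsa : Antitone s) (hta : Antitone t)
    (hs : Summable s) (ht : Summable t) (hss' : SameRigged s s') (htt' : SameRigged t t')
    {c : ℝ} (hc : HasSum (fun j => |s' j - t' j|) c) :
    ∑' j, |s j - t j| ≤ c := by
  rw [← hc.tsum_eq, ← ENNReal.ofReal_le_ofReal_iff (tsum_nonneg fun _ => abs_nonneg _),
    ENNReal.ofReal_tsum_of_nonneg (fun _ => abs_nonneg _) (hs.abs_sub ht),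
    ENNReal.ofReal_tsum_of_nonneg (fun _ => abs_nonneg _) hc.summable,
    tsum_ofReal_abs_sub_eq_lintegral, tsum_ofReal_abs_sub_eq_lintegral]
  exact lintegral_mono fun l =>
    ENat.toENNReal_le.2 (encard_setOf_mem_uIoc_le hs0 ht0 hsa hta hs ht hss' htt' l)

/-- for multisets of nonnegative reals with finite ℓ¹-mass, the
transport distance equals the ℓ¹-distance of the nonincreasing enumerations. -/
theorem stmt_9 (s t : ℕ → ℝ)
    (hs0 : ∀ j, 0 ≤ s j) (ht0 : ∀ j, 0 ≤ t j)
    (hsa : Antitone s) (hta : Antitone t)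
    (hs : Summable s) (ht : Summable t) :
    rdist s t = ∑' j, |s j - t j| := by
  refine IsLeast.csInf_eq ⟨⟨s, t, .refl s, .refl t, (hs.abs_sub ht).hasSum⟩, ?_⟩
  rintro c ⟨s', t', hss', htt', hc⟩
  exact tsum_abs_sub_le_of_hasSum hs0 ht0 hsa hta hs ht hss' htt' hc
end
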